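/- Define H : ℝ³ → ℝ by H(ξ) = ‖ξ‖·√(2 + ‖ξ‖²), with gradient ∇H(η) = h'(‖η‖)·η/‖η‖ for η ≠ 0, where h'(r) = 2(1+r²)/√(2+r²). Then for all nonzero x, y ∈ ℝ³: ‖∇H(x) + ∇H(y)‖ ≥ max( √2·‖x/‖x‖ + y/‖y‖‖ , |h'(‖x‖) - h'(‖y‖)| ). -/

import Mathlib

/-!
Both gradients point along the unit vectors `u = x/‖x‖`, `v = y/‖y‖`, with lengths `A = h'(‖x‖)`
and `B = h'(‖y‖)`, both at least `√2`. If `B ≤ A`, then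
`A u + B v = B (u + v) + (A - B) u`, and the two summands have nonnegative inner product
`B (A - B) (1 + ⟪u, v⟫)`, so the norm of the sum dominates both `B ‖u + v‖ ≥ √2 ‖u + v‖` and
`A - B`.
-/

open Real RealInnerProductSpace

section Gradient

variable {F : Type*} [NormedAddCommGroup F] [InnerProductSpace ℝ F] [CompleteSpace F]

theorem hasGradientAt_norm {x : F} (hx : x ≠ 0) : HasGradientAt (‖·‖) (‖x‖⁻¹ • x) x := by
  have hsqrt := (hasDerivAt_sqrt (pow_ne_zero 2 (norm_ne_zero_iff.2 hx))).comp_hasFDerivAt x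
    (hasStrictFDerivAt_norm_sq x).hasFDerivAt
  simp only [Function.comp_def, sqrt_sq (norm_nonneg _)] at hsqrt
  rw [hasGradientAt_iff_hasFDerivAt]
  refine hsqrt.congr_fderiv ?_
  ext v
  simp only [one_div, mul_inv_rev, smul_apply, coe_innerSL_apply,
    nsmul_eq_mul, Nat.cast_ofNat, smul_eq_mul, map_smul, InnerProductSpace.toDual_apply_apply]
  field_simp

theorem HasDerivAt.hasGradientAt_comp_norm {f : ℝ → ℝ} {f' : ℝ} {x : F}
    (hf : HasDerivAt f f' ‖x‖) (hx : x ≠ 0) :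
    HasGradientAt (fun y => f ‖y‖) (f' • ‖x‖⁻¹ • x) x := by
  rw [hasGradientAt_iff_hasFDerivAt, map_smul]
  exact hf.comp_hasFDerivAt x (hasGradientAt_iff_hasFDerivAt.1 (hasGradientAt_norm hx))

end Gradient

/-- The paper's `h'`, the derivative of `h(r) = r √(2 + r²)`. -/
noncomputable def radialSlope (r : ℝ) : ℝ := 2 * (1 + r ^ 2) / √(2 + r ^ 2)

theorem hasDerivAt_mul_sqrt_two_add_sq (r : ℝ) :
    HasDerivAt (fun s => s * √(2 + s ^ 2)) (radialSlope r) r := by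
  have h2 : 0 < 2 + r ^ 2 := by positivity
  refine ((hasDerivAt_id' r).mul
    (((hasDerivAt_pow 2 r).const_add 2).sqrt h2.ne')).congr_deriv ?_
  have hs := sq_sqrt h2.le
  have hs0 := (sqrt_pos.2 h2).ne'
  simp only [radialSlope, one_mul, Nat.cast_ofNat, Nat.add_one_sub_one, pow_one]
  field_simp
  linear_combination hs

theorem sqrt_two_le_radialSlope (r : ℝ) : √2 ≤ radialSlope r := by
  have h2 : 0 < 2 + r ^ 2 := by positivity
  rw [radialSlope, le_div_iff₀ (sqrt_pos.2 h2), ← sqrt_mul zero_le_two]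
  refine sqrt_le_iff.2 ⟨by positivity, ?_⟩
  nlinarith [sq_nonneg r, sq_nonneg (r ^ 2)]

section Geometry

variable {F : Type*} [NormedAddCommGroup F] [InnerProductSpace ℝ F]

theorem norm_le_norm_add_of_inner_nonneg {s t : F} (h : 0 ≤ ⟪s, t⟫) : ‖s‖ ≤ ‖s + t‖ := by
  have hsq : ‖s‖ ^ 2 ≤ ‖s + t‖ ^ 2 := by
    rw [norm_add_sq_real]
    nlinarith [sq_nonneg ‖t‖]
  exact (pow_le_pow_iff_left₀ (norm_nonneg _) (norm_nonneg _) two_ne_zero).1 hsq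

theorem inner_add_left_self_nonneg_of_norm_le {u v : F} (h : ‖v‖ ≤ ‖u‖) : 0 ≤ ⟪u + v, u⟫ := by
  rw [inner_add_left, real_inner_self_eq_norm_sq]
  nlinarith [neg_abs_le ⟪v, u⟫, abs_real_inner_le_norm v u, norm_nonneg v]

theorem le_norm_smul_add_smul_of_le {u v : F} (hvu : ‖v‖ ≤ ‖u‖) {A B : ℝ} (hB : 0 ≤ B)
    (hBA : B ≤ A) :
    B * ‖u + v‖ ≤ ‖A • u + B • v‖ ∧ (A - B) * ‖u‖ ≤ ‖A • u + B • v‖ := by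
  have hsplit : A • u + B • v = B • (u + v) + (A - B) • u := by
    rw [smul_add, sub_smul]; abel
  have hinner : 0 ≤ ⟪B • (u + v), (A - B) • u⟫ := by
    rw [real_inner_smul_left, real_inner_smul_right]
    exact mul_nonneg hB (mul_nonneg (sub_nonneg.2 hBA) (inner_add_left_self_nonneg_of_norm_le hvu))
  rw [hsplit]
  constructor
  · have h := norm_le_norm_add_of_inner_nonneg hinner
    rwa [norm_smul_of_nonneg hB] at h
  · rw [real_inner_comm] at hinner
    have h := norm_le_norm_add_of_inner_nonneg hinner
    rwa [norm_smul_of_nonneg (sub_nonneg.2 hBA), add_comm] at h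

theorem max_le_norm_smul_add_smul {u v : F} (hu : ‖u‖ = 1) (hv : ‖v‖ = 1) {A B : ℝ}
    (hA : √2 ≤ A) (hB : √2 ≤ B) : max (√2 * ‖u + v‖) |A - B| ≤ ‖A • u + B • v‖ := by
  wlog hBA : B ≤ A generalizing u v A B
  · simpa only [add_comm, abs_sub_comm] using this hv hu hB hA (le_of_not_ge hBA)
  obtain ⟨hsum, hdiff⟩ := le_norm_smul_add_smul_of_le (hv.trans hu.symm).le
    ((sqrt_nonneg 2).trans hB) hBA
  rw [hu, mul_one] at hdiff
  refine max_le ?_ ((abs_of_nonneg (sub_nonneg.2 hBA)).trans_le hdiff)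
  exact (mul_le_mul_of_nonneg_right hB (norm_nonneg _)).trans hsum

end Geometry

/-- For `H(ξ) = ‖ξ‖·√(2 + ‖ξ‖²)` on `ℝ³` (so `∇H(η) = h'(‖η‖)·η/‖η‖` with
`h'(r) = 2(1+r²)/√(2+r²)`), for all nonzero `x, y`:
`‖∇H(x) + ∇H(y)‖ ≥ max(√2·‖x/‖x‖ + y/‖y‖‖, |h'(‖x‖) - h'(‖y‖)|)`. -/
theorem stmt_17 (H : EuclideanSpace ℝ (Fin 3) → ℝ)
    (hH : ∀ ξ : EuclideanSpace ℝ (Fin 3), H ξ = ‖ξ‖ * Real.sqrt (2 + ‖ξ‖ ^ 2))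
    (x y : EuclideanSpace ℝ (Fin 3)) (hx : x ≠ 0) (hy : y ≠ 0) :
    max (Real.sqrt 2 * ‖‖x‖⁻¹ • x + ‖y‖⁻¹ • y‖)
        |2 * (1 + ‖x‖ ^ 2) / Real.sqrt (2 + ‖x‖ ^ 2) -
          2 * (1 + ‖y‖ ^ 2) / Real.sqrt (2 + ‖y‖ ^ 2)| ≤
      ‖gradient H x + gradient H y‖ := by
  have hgrad : ∀ z : EuclideanSpace ℝ (Fin 3), z ≠ 0 →
      gradient H z = radialSlope ‖z‖ • ‖z‖⁻¹ • z := fun z hz => by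
    rw [funext hH]
    exact ((hasDerivAt_mul_sqrt_two_add_sq ‖z‖).hasGradientAt_comp_norm hz).gradient
  rw [hgrad x hx, hgrad y hy]
  exact max_le_norm_smul_add_smul (norm_smul_inv_norm hx) (norm_smul_inv_norm hy)
    (sqrt_two_le_radialSlope _) (sqrt_two_le_radialSlope _)
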